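/- arXiv:2011.11768 — 2 statements merged into one kernel-verified Lean document; each statement's English description precedes it below -/
import Mathlib

section
/- Let σ > 0 and let μ satisfy 0 < μ < μ₁(σ), where μ₁(σ) = (√(2σ² + 4σ + 4) − σ − 2)/σ². Then the set of equilibria of the fully symmetric convergence–divergence game in the unit square, {(x,y) ∈ [0,1] × [0,1] : F₁(x,y) = 0 and F₂(x,y) = 0}, has exactly nine elements, and it contains the five points (1/2, 1/2), (1/2 + δ̃(σ,μ), 1/2 − δ̃(σ,μ)), (1/2 − δ̃(σ,μ), 1/2 + δ̃(σ,μ)), (1/2 + δ(σ,μ), 1/2 + δ(σ,μ)) and (1/2 − δ(σ,μ), 1/2 − δ(σ,μ)), where δ̃(σ,μ) = √(−(3σ² + 4σ)μ² − 2(σ² + 3σ + 2)μ + (σ + 1)²) / (2(σμ + σ + 1)) and δ(σ,μ) = √((σ² + 4σ)μ² − 2(σ + 2)μ + 1) / (2(σμ − 1)). -/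
noncomputable def F1 (σ μ x y : ℝ) : ℝ :=
  ((1 - x) - μ) * x * (x + σ * x * (1 - y)) - (x - μ) * (1 - x) * ((1 - x) + σ * (1 - x) * y)

noncomputable def F2 (σ μ x y : ℝ) : ℝ :=
  ((1 - y) - μ) * y * (y + σ * y * (1 - x)) - (y - μ) * (1 - y) * ((1 - y) + σ * (1 - y) * x)

noncomputable def deltaTilde (σ μ : ℝ) : ℝ :=
  Real.sqrt (-(3 * σ^2 + 4 * σ) * μ^2 - 2 * (σ^2 + 3 * σ + 2) * μ + (σ + 1)^2) /
    (2 * (σ * μ + σ + 1))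

noncomputable def deltaD (σ μ : ℝ) : ℝ :=
  Real.sqrt ((σ^2 + 4 * σ) * μ^2 - 2 * (σ + 2) * μ + 1) / (2 * (σ * μ - 1))

/-!
In the coordinates `s = (x + y - 1) / 2`, `d = (x - y) / 2` one has `F₁ - F₂ = d · P(s, d)` and
`F₁ + F₂ = s · Q(s, d)`, where `P` and `Q` are affine in `s²` and `d²`. The equilibria are therefore
the centre `s = d = 0`, the divergent pair `s = 0, P = 0` (that is `d = ±δ̃`), the convergent pair
`d = 0, Q = 0` (that is `s = ±δ`), and the solutions of `P = Q = 0`, a linear system in `(s², d²)`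
whose solution gives four mixed equilibria `(±r, ±e)`. The condition `μ < μ₁(σ)` says exactly that
`e² > 0`; it forces the other three discriminants to be positive as well, so the nine points are
distinct, and all of them lie in the diamond `|s| + |d| ≤ 1/2`, which is the unit square.
-/

lemma sq_mul_eq_iff {c t D : ℝ} (hc : c ≠ 0) (hD : 0 ≤ D) :
    (c * t) ^ 2 = D ↔ t = √D / c ∨ t = -(√D / c) := by
  calc (c * t) ^ 2 = D ↔ (c * t) ^ 2 = √D ^ 2 := by rw [Real.sq_sqrt hD]
    _ ↔ c * t = √D ∨ c * t = -√D := sq_eq_sq_iff_eq_or_eq_neg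
    _ ↔ _ := by rw [← neg_div, eq_div_iff hc, eq_div_iff hc, mul_comm t c]

lemma abs_sqrt_div_two_mul_le {D c : ℝ} (hD : D ≤ c ^ 2) : |√D / (2 * c)| ≤ 1/2 := by
  rw [abs_div, abs_of_nonneg (Real.sqrt_nonneg D)]
  refine div_le_of_le_mul₀ (abs_nonneg _) (by norm_num) ?_
  calc √D ≤ √(c ^ 2) := Real.sqrt_le_sqrt hD
    _ = 1/2 * |2 * c| := by rw [Real.sqrt_sq_eq_abs, abs_mul, abs_two]; ring

noncomputable def meanGapEquiv : ℝ × ℝ ≃ ℝ × ℝ where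
  toFun q := (1/2 + q.1 + q.2, 1/2 + q.1 - q.2)
  invFun p := ((p.1 + p.2 - 1) / 2, (p.1 - p.2) / 2)
  left_inv q := by ext <;> simp only <;> ring
  right_inv p := by ext <;> simp only <;> ring

@[simp]
lemma meanGapEquiv_apply (q : ℝ × ℝ) : meanGapEquiv q = (1/2 + q.1 + q.2, 1/2 + q.1 - q.2) := rfl

lemma meanGapEquiv_mem_unitSquare {q : ℝ × ℝ} (hq : |q.1| + |q.2| ≤ 1/2) :
    meanGapEquiv q ∈ Set.Icc (0:ℝ) 1 ×ˢ Set.Icc (0:ℝ) 1 := by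
  simp only [meanGapEquiv_apply, Set.mem_prod, Set.mem_Icc]
  refine ⟨⟨?_, ?_⟩, ?_, ?_⟩ <;>
    linarith [le_abs_self q.1, neg_abs_le q.1, le_abs_self q.2, neg_abs_le q.2]

def signOrbits (a b r e : ℝ) : Set (ℝ × ℝ) :=
  {0} ×ˢ {0} ∪ {0} ×ˢ {a, -a} ∪ {b, -b} ×ˢ {0} ∪ {r, -r} ×ˢ {e, -e}

variable {a b r e : ℝ}

lemma ncard_signOrbits (ha : a ≠ 0) (hb : b ≠ 0) (hr : r ≠ 0) (he : e ≠ 0) :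
    (signOrbits a b r e).ncard = 9 := by
  have hpair {x : ℝ} (hx : x ≠ 0) : ({x, -x} : Set ℝ).ncard = 2 :=
    Set.ncard_pair (self_ne_neg.mpr hx)
  rw [signOrbits, Set.ncard_union_eq, Set.ncard_union_eq, Set.ncard_union_eq]
  · simp only [Set.ncard_prod, Set.ncard_singleton, hpair ha, hpair hb, hpair hr, hpair he]
  all_goals
    rw [Set.disjoint_left]
    simp only [Set.mem_union, Set.mem_prod, Set.mem_singleton_iff, Set.mem_insert_iff]
    grind

lemma abs_add_abs_le_of_mem_signOrbits (ha : |a| ≤ 1/2) (hb : |b| ≤ 1/2)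
    (hre : |r| + |e| ≤ 1/2) {q : ℝ × ℝ} (hq : q ∈ signOrbits a b r e) :
    |q.1| + |q.2| ≤ 1/2 := by
  simp only [signOrbits, Set.mem_union, Set.mem_prod, Set.mem_singleton_iff,
    Set.mem_insert_iff] at hq
  rcases hq with ((⟨h1, h2⟩ | ⟨h1, h2 | h2⟩) | ⟨h1 | h1, h2⟩) | ⟨h1 | h1, h2 | h2⟩ <;>
    simp only [h1, h2, abs_zero, abs_neg, zero_add, add_zero] <;> linarith

def divergentFactor (σ μ s d : ℝ) : ℝ :=
  (σ + 1) - (3 * σ + 4) * μ - 4 * (σ + 3 - σ * μ) * s ^ 2 - 4 * (σ * μ + σ + 1) * d ^ 2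

def convergentFactor (σ μ s d : ℝ) : ℝ :=
  (1 - σ * μ - 4 * μ) - 4 * (1 - σ * μ) * s ^ 2 - 4 * (σ * μ + 2 * σ + 3) * d ^ 2

def divergentDisc (σ μ : ℝ) : ℝ :=
  -(3 * σ^2 + 4 * σ) * μ^2 - 2 * (σ^2 + 3 * σ + 2) * μ + (σ + 1)^2

def convergentDisc (σ μ : ℝ) : ℝ :=
  (σ^2 + 4 * σ) * μ^2 - 2 * (σ + 2) * μ + 1

def mixedMeanDisc (σ μ : ℝ) : ℝ :=
  (σ + 1)^2 - 2 * (σ^2 + 3 * σ + 2) * μ - σ^2 * μ^2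

def mixedGapDisc (σ μ : ℝ) : ℝ :=
  1 - 2 * (σ + 2) * μ - σ^2 * μ^2

noncomputable def mixedMean (σ μ : ℝ) : ℝ :=
  √(mixedMeanDisc σ μ) / (2 * (σ + 2))

noncomputable def mixedGap (σ μ : ℝ) : ℝ :=
  √(mixedGapDisc σ μ) / (2 * (σ + 2))

variable {σ μ s d : ℝ}

lemma F1_sub_F2 :
    F1 σ μ (1/2 + s + d) (1/2 + s - d) - F2 σ μ (1/2 + s + d) (1/2 + s - d) =
      d * divergentFactor σ μ s d := by
  simp only [F1, F2, divergentFactor]; ring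

lemma F1_add_F2 :
    F1 σ μ (1/2 + s + d) (1/2 + s - d) + F2 σ μ (1/2 + s + d) (1/2 + s - d) =
      s * convergentFactor σ μ s d := by
  simp only [F1, F2, convergentFactor]; ring

lemma F1_eq_zero_and_F2_eq_zero_iff :
    F1 σ μ (1/2 + s + d) (1/2 + s - d) = 0 ∧ F2 σ μ (1/2 + s + d) (1/2 + s - d) = 0 ↔
      (d = 0 ∨ divergentFactor σ μ s d = 0) ∧ (s = 0 ∨ convergentFactor σ μ s d = 0) := by
  rw [← mul_eq_zero, ← mul_eq_zero, ← F1_sub_F2, ← F1_add_F2]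
  constructor
  · rintro ⟨h1, h2⟩
    exact ⟨by rw [h1, h2, sub_zero], by rw [h1, h2, add_zero]⟩
  · rintro ⟨h1, h2⟩
    constructor <;> linarith

lemma divergentFactor_zero_left_eq_zero_iff (hA : σ * μ + σ + 1 ≠ 0)
    (hD : 0 ≤ divergentDisc σ μ) :
    divergentFactor σ μ 0 d = 0 ↔ d = deltaTilde σ μ ∨ d = -deltaTilde σ μ := by
  refine Iff.trans ?_ (sq_mul_eq_iff (mul_ne_zero two_ne_zero hA) hD)
  unfold divergentFactor
  constructor <;> intro h
  · linear_combination (-(σ * μ + σ + 1)) * h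
  · refine mul_left_cancel₀ hA ?_
    linear_combination (-1) * h

lemma convergentFactor_zero_right_eq_zero_iff (hC : σ * μ - 1 ≠ 0)
    (hD : 0 ≤ convergentDisc σ μ) :
    convergentFactor σ μ s 0 = 0 ↔ s = deltaD σ μ ∨ s = -deltaD σ μ := by
  refine Iff.trans ?_ (sq_mul_eq_iff (mul_ne_zero two_ne_zero hC) hD)
  unfold convergentFactor
  constructor <;> intro h
  · linear_combination (σ * μ - 1) * h
  · refine mul_left_cancel₀ hC ?_
    linear_combination h

lemma factors_eq_zero_iff (hσ : σ + 2 ≠ 0) (hR : 0 ≤ mixedMeanDisc σ μ)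
    (hE : 0 ≤ mixedGapDisc σ μ) :
    divergentFactor σ μ s d = 0 ∧ convergentFactor σ μ s d = 0 ↔
      (s = mixedMean σ μ ∨ s = -mixedMean σ μ) ∧ (d = mixedGap σ μ ∨ d = -mixedGap σ μ) := by
  have hc : 2 * (σ + 2) ≠ 0 := mul_ne_zero two_ne_zero hσ
  rw [mixedMean, mixedGap, ← sq_mul_eq_iff hc hR, ← sq_mul_eq_iff hc hE]
  unfold divergentFactor convergentFactor mixedMeanDisc mixedGapDisc
  -- `P = Q = 0` is a linear system in `(s², d²)` with determinant `2 (σ + 2)²`.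
  constructor
  · rintro ⟨hP, hQ⟩
    constructor
    · linear_combination (-(σ * μ + 2 * σ + 3) / 2) * hP + ((σ * μ + σ + 1) / 2) * hQ
    · linear_combination ((1 - σ * μ) / 2) * hP - ((σ + 3 - σ * μ) / 2) * hQ
  · rintro ⟨hs, hd⟩
    constructor <;> refine mul_left_cancel₀ (pow_ne_zero 2 hσ) ?_
    · linear_combination (-(σ + 3 - σ * μ)) * hs - (σ * μ + σ + 1) * hd
    · linear_combination (-(1 - σ * μ)) * hs - (σ * μ + 2 * σ + 3) * hd

lemma mixedGapDisc_pos_of_lt (hσ : 0 < σ) (hμ : 0 ≤ μ)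
    (h : μ < (√(2 * σ^2 + 4 * σ + 4) - σ - 2) / σ^2) : 0 < mixedGapDisc σ μ := by
  have hlt : σ^2 * μ + σ + 2 < √(2 * σ^2 + 4 * σ + 4) := by
    rw [lt_div_iff₀ (by positivity)] at h; linarith
  have hsq : (σ^2 * μ + σ + 2)^2 < 2 * σ^2 + 4 * σ + 4 := by
    calc (σ^2 * μ + σ + 2)^2 < √(2 * σ^2 + 4 * σ + 4) ^ 2 := by gcongr
      _ = 2 * σ^2 + 4 * σ + 4 := Real.sq_sqrt (by positivity)
  have hE : σ^2 * mixedGapDisc σ μ = 2 * σ^2 + 4 * σ + 4 - (σ^2 * μ + σ + 2)^2 := by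
    unfold mixedGapDisc; ring
  exact pos_of_mul_pos_right (by linarith : 0 < σ^2 * mixedGapDisc σ μ) (by positivity)

lemma mul_lt_one_of_mixedGapDisc_pos (hμ : 0 ≤ μ) (hE : 0 < mixedGapDisc σ μ) :
    σ * μ < 1 := by
  unfold mixedGapDisc at hE; nlinarith

lemma divergentDisc_pos (hσ : 0 ≤ σ) (hμ : 0 ≤ μ) (hE : 0 < mixedGapDisc σ μ) :
    0 < divergentDisc σ μ := by
  have hμ1 : μ < 1 := by unfold mixedGapDisc at hE; nlinarith
  have h : divergentDisc σ μ = (σ + 1)^2 * mixedGapDisc σ μ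
      + σ * (σ + 2) * μ * (2 * (σ + 1) + (σ^2 - 2) * μ) := by
    unfold divergentDisc mixedGapDisc; ring
  have : 0 ≤ 2 * (σ + 1) + (σ^2 - 2) * μ := by nlinarith [mul_nonneg (sq_nonneg σ) hμ]
  rw [h]; positivity

lemma convergentDisc_pos (hσ : 0 ≤ σ) (hE : 0 < mixedGapDisc σ μ) :
    0 < convergentDisc σ μ := by
  have h : convergentDisc σ μ = mixedGapDisc σ μ + 2 * σ * (σ + 2) * μ^2 := by
    unfold convergentDisc mixedGapDisc; ring
  rw [h]; positivity

lemma mixedMeanDisc_pos (hσ : 0 ≤ σ) (hμ : 0 ≤ μ) (hE : 0 < mixedGapDisc σ μ) :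
    0 < mixedMeanDisc σ μ := by
  have hμ1 : 2 * μ ≤ 1 := by unfold mixedGapDisc at hE; nlinarith
  have h : mixedMeanDisc σ μ = mixedGapDisc σ μ + σ * (σ + 2) * (1 - 2 * μ) := by
    unfold mixedMeanDisc mixedGapDisc; ring
  have : 0 ≤ 1 - 2 * μ := by linarith
  rw [h]; positivity

lemma abs_deltaTilde_le (hσ : 0 ≤ σ) (hμ : 0 ≤ μ) : |deltaTilde σ μ| ≤ 1/2 :=
  abs_sqrt_div_two_mul_le (by nlinarith [mul_nonneg hσ hμ, mul_nonneg (mul_nonneg hσ hσ) hμ])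

lemma abs_deltaD_le (hμ : 0 ≤ μ) (h : σ * μ ≤ 1) : |deltaD σ μ| ≤ 1/2 :=
  abs_sqrt_div_two_mul_le (by nlinarith [mul_nonneg hμ (sub_nonneg.2 h)])

lemma abs_mixedMean_add_abs_mixedGap_le (hσ : 0 ≤ σ) (hμ : 0 ≤ μ) :
    |mixedMean σ μ| + |mixedGap σ μ| ≤ 1/2 := by
  have hR : √(mixedMeanDisc σ μ) ≤ σ + 1 := by
    rw [Real.sqrt_le_left (by linarith)]; unfold mixedMeanDisc; nlinarith [mul_nonneg hσ hμ]
  have hE : √(mixedGapDisc σ μ) ≤ 1 := by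
    rw [Real.sqrt_le_left zero_le_one]; unfold mixedGapDisc; nlinarith [mul_nonneg hσ hμ]
  rw [mixedMean, mixedGap, abs_of_nonneg (by positivity), abs_of_nonneg (by positivity),
    ← add_div, div_le_iff₀ (by positivity)]
  linarith

lemma deltaTilde_ne_zero (hσ : 0 ≤ σ) (hμ : 0 ≤ μ) (hE : 0 < mixedGapDisc σ μ) :
    deltaTilde σ μ ≠ 0 :=
  div_ne_zero (Real.sqrt_pos.2 (divergentDisc_pos hσ hμ hE)).ne' (by positivity)

lemma deltaD_ne_zero (hσ : 0 ≤ σ) (hμ : 0 ≤ μ) (hE : 0 < mixedGapDisc σ μ) :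
    deltaD σ μ ≠ 0 := by
  have := mul_lt_one_of_mixedGapDisc_pos hμ hE
  exact div_ne_zero (Real.sqrt_pos.2 (convergentDisc_pos hσ hE)).ne' (by linarith)

lemma mixedMean_ne_zero (hσ : 0 ≤ σ) (hμ : 0 ≤ μ) (hE : 0 < mixedGapDisc σ μ) :
    mixedMean σ μ ≠ 0 :=
  div_ne_zero (Real.sqrt_pos.2 (mixedMeanDisc_pos hσ hμ hE)).ne' (by positivity)

lemma mixedGap_ne_zero (hσ : 0 ≤ σ) (hE : 0 < mixedGapDisc σ μ) : mixedGap σ μ ≠ 0 :=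
  div_ne_zero (Real.sqrt_pos.2 hE).ne' (by positivity)

lemma F1_eq_zero_and_F2_eq_zero_iff_mem_signOrbits (hσ : 0 ≤ σ) (hμ : 0 ≤ μ)
    (hE : 0 < mixedGapDisc σ μ) :
    F1 σ μ (1/2 + s + d) (1/2 + s - d) = 0 ∧ F2 σ μ (1/2 + s + d) (1/2 + s - d) = 0 ↔
      (s, d) ∈ signOrbits (deltaTilde σ μ) (deltaD σ μ) (mixedMean σ μ) (mixedGap σ μ) := by
  have hσμ := mul_lt_one_of_mixedGapDisc_pos hμ hE
  simp only [signOrbits, Set.mem_union, Set.mem_prod, Set.mem_singleton_iff, Set.mem_insert_iff]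
  rw [← divergentFactor_zero_left_eq_zero_iff (by positivity) (divergentDisc_pos hσ hμ hE).le,
    ← convergentFactor_zero_right_eq_zero_iff (by linarith) (convergentDisc_pos hσ hE).le,
    ← factors_eq_zero_iff (by positivity) (mixedMeanDisc_pos hσ hμ hE).le hE.le,
    F1_eq_zero_and_F2_eq_zero_iff]
  grind

lemma unitSquare_equilibria_eq (hσ : 0 ≤ σ) (hμ : 0 ≤ μ) (hE : 0 < mixedGapDisc σ μ) :
    {p : ℝ × ℝ | p ∈ Set.Icc (0:ℝ) 1 ×ˢ Set.Icc (0:ℝ) 1 ∧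
        F1 σ μ p.1 p.2 = 0 ∧ F2 σ μ p.1 p.2 = 0} =
      meanGapEquiv '' signOrbits (deltaTilde σ μ) (deltaD σ μ) (mixedMean σ μ) (mixedGap σ μ) := by
  ext p
  obtain ⟨⟨s, d⟩, rfl⟩ := meanGapEquiv.surjective p
  have key := F1_eq_zero_and_F2_eq_zero_iff_mem_signOrbits (s := s) (d := d) hσ hμ hE
  rw [meanGapEquiv.injective.mem_set_image, ← key]
  refine ⟨fun h => h.2, fun h => ⟨meanGapEquiv_mem_unitSquare ?_, h⟩⟩
  exact abs_add_abs_le_of_mem_signOrbits (abs_deltaTilde_le hσ hμ)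
    (abs_deltaD_le hμ (mul_lt_one_of_mixedGapDisc_pos hμ hE).le)
    (abs_mixedMean_add_abs_mixedGap_le hσ hμ) (key.1 h)

theorem phase_IV_nine_equilibria (σ μ : ℝ) (hσ : 0 < σ)
    (hlo : 0 < μ) (hhi : μ < (Real.sqrt (2 * σ^2 + 4 * σ + 4) - σ - 2) / σ^2) :
    ({p : ℝ × ℝ | p ∈ Set.Icc (0:ℝ) 1 ×ˢ Set.Icc (0:ℝ) 1 ∧
        F1 σ μ p.1 p.2 = 0 ∧ F2 σ μ p.1 p.2 = 0}).ncard = 9 ∧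
    ({(1/2, 1/2),
      (1/2 + deltaTilde σ μ, 1/2 - deltaTilde σ μ),
      (1/2 - deltaTilde σ μ, 1/2 + deltaTilde σ μ),
      (1/2 + deltaD σ μ, 1/2 + deltaD σ μ),
      (1/2 - deltaD σ μ, 1/2 - deltaD σ μ)} : Set (ℝ × ℝ)) ⊆
      {p : ℝ × ℝ | p ∈ Set.Icc (0:ℝ) 1 ×ˢ Set.Icc (0:ℝ) 1 ∧
        F1 σ μ p.1 p.2 = 0 ∧ F2 σ μ p.1 p.2 = 0} := by
  have hE := mixedGapDisc_pos_of_lt hσ hlo.le hhi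
  rw [unitSquare_equilibria_eq hσ.le hlo.le hE]
  refine ⟨?_, ?_⟩
  · rw [Set.ncard_image_of_injective _ meanGapEquiv.injective]
    exact ncard_signOrbits (deltaTilde_ne_zero hσ.le hlo.le hE) (deltaD_ne_zero hσ.le hlo.le hE)
      (mixedMean_ne_zero hσ.le hlo.le hE) (mixedGap_ne_zero hσ.le hE)
  · rintro p (rfl | rfl | rfl | rfl | rfl)
    · exact ⟨(0, 0), by simp [signOrbits], by simp⟩
    · exact ⟨(0, deltaTilde σ μ), by simp [signOrbits], by simp⟩
    · exact ⟨(0, -deltaTilde σ μ), by simp [signOrbits], by simp [sub_eq_add_neg]⟩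
    · exact ⟨(deltaD σ μ, 0), by simp [signOrbits], by simp⟩
    · exact ⟨(-deltaD σ μ, 0), by simp [signOrbits], by simp [sub_eq_add_neg]⟩
end

section
/- Let σ > 0 and let μ satisfy 0 < μ < μ₃(σ), where μ₃(σ) = (σ + 1)/(3σ + 4). Then the radicand −(3σ² + 4σ)μ² − 2(σ² + 3σ + 2)μ + (σ + 1)² is strictly positive, the divergent displacement satisfies 0 < δ̃(σ,μ) < 1/2, and both points (1/2 + δ̃(σ,μ), 1/2 − δ̃(σ,μ)) and (1/2 − δ̃(σ,μ), 1/2 + δ̃(σ,μ)) are equilibria of the fully symmetric convergence–divergence game. -/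
/-! Along the antidiagonal `(1/2 + d, 1/2 - d)`, `F₁` is odd in `d` and `F₂` is `F₁` with the
populations swapped, so both equilibrium equations reduce to the single cubic
`d · ((σ + 1 - (3σ + 4)μ) - 4(σμ + σ + 1) d²) = 0`. The radicand factors as
`(σ + 1 - (3σ + 4)μ)(σμ + σ + 1)`, so `δ̃² = (σ + 1 - (3σ + 4)μ) / (4(σμ + σ + 1))` is exactly
the nonzero root; it is positive precisely when `μ < μ₃(σ)`, and below `1/4` because `μ > 0`. -/

def IsEquilibrium (σ μ x y : ℝ) : Prop :=
  F1 σ μ x y = 0 ∧ F2 σ μ x y = 0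

theorem F2_eq_F1_swap (σ μ x y : ℝ) : F2 σ μ x y = F1 σ μ y x := by
  unfold F1 F2; ring

theorem F1_antidiagonal (σ μ d : ℝ) :
    F1 σ μ (1/2 + d) (1/2 - d) =
      d * ((σ + 1 - (3 * σ + 4) * μ) - 4 * (σ * μ + σ + 1) * d^2) / 2 := by
  unfold F1; ring

theorem F1_antidiagonal_swap (σ μ d : ℝ) :
    F1 σ μ (1/2 - d) (1/2 + d) = -F1 σ μ (1/2 + d) (1/2 - d) := by
  unfold F1; ring

theorem radicand_eq (σ μ : ℝ) :
    -(3 * σ^2 + 4 * σ) * μ^2 - 2 * (σ^2 + 3 * σ + 2) * μ + (σ + 1)^2 =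
      (σ + 1 - (3 * σ + 4) * μ) * (σ * μ + σ + 1) := by
  ring

theorem deltaTilde_eq (σ μ : ℝ) :
    deltaTilde σ μ =
      Real.sqrt ((σ + 1 - (3 * σ + 4) * μ) * (σ * μ + σ + 1)) / (2 * (σ * μ + σ + 1)) := by
  rw [deltaTilde, radicand_eq]

section

variable {σ μ : ℝ}

theorem isEquilibrium_antidiagonal {d : ℝ}
    (hd : 4 * (σ * μ + σ + 1) * d^2 = σ + 1 - (3 * σ + 4) * μ) :
    IsEquilibrium σ μ (1/2 + d) (1/2 - d) ∧ IsEquilibrium σ μ (1/2 - d) (1/2 + d) := by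
  have h : F1 σ μ (1/2 + d) (1/2 - d) = 0 := by
    rw [F1_antidiagonal, hd, sub_self, mul_zero, zero_div]
  have h' : F1 σ μ (1/2 - d) (1/2 + d) = 0 := by
    rw [F1_antidiagonal_swap, h, neg_zero]
  exact ⟨⟨h, by rwa [F2_eq_F1_swap]⟩, ⟨h', by rwa [F2_eq_F1_swap]⟩⟩

theorem deltaTilde_pos (hgap : 0 < σ + 1 - (3 * σ + 4) * μ) (hden : 0 < σ * μ + σ + 1) :
    0 < deltaTilde σ μ := by
  rw [deltaTilde_eq]; positivity

theorem four_mul_deltaTilde_sq (hgap : 0 ≤ σ + 1 - (3 * σ + 4) * μ)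
    (hden : 0 < σ * μ + σ + 1) :
    4 * (σ * μ + σ + 1) * deltaTilde σ μ ^ 2 = σ + 1 - (3 * σ + 4) * μ := by
  rw [deltaTilde_eq, div_pow, Real.sq_sqrt (mul_nonneg hgap hden.le)]
  generalize σ * μ + σ + 1 = c at hden ⊢
  field_simp
  ring

theorem deltaTilde_lt_half (hσ : -1 < σ) (hμ : 0 < μ) (hgap : 0 ≤ σ + 1 - (3 * σ + 4) * μ)
    (hden : 0 < σ * μ + σ + 1) : deltaTilde σ μ < 1/2 := by
  have hsq := four_mul_deltaTilde_sq hgap hden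
  have hgap_lt : σ + 1 - (3 * σ + 4) * μ < σ * μ + σ + 1 := by nlinarith
  have : deltaTilde σ μ ^ 2 < (1/2) ^ 2 := by nlinarith
  exact lt_of_pow_lt_pow_left₀ 2 (by norm_num) this

end

theorem divergent_equilibria_exist (σ μ : ℝ) (hσ : 0 < σ)
    (hlo : 0 < μ) (hhi : μ < (σ + 1) / (3 * σ + 4)) :
    0 < -(3 * σ^2 + 4 * σ) * μ^2 - 2 * (σ^2 + 3 * σ + 2) * μ + (σ + 1)^2 ∧
    0 < deltaTilde σ μ ∧ deltaTilde σ μ < 1/2 ∧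
    (F1 σ μ (1/2 + deltaTilde σ μ) (1/2 - deltaTilde σ μ) = 0 ∧
      F2 σ μ (1/2 + deltaTilde σ μ) (1/2 - deltaTilde σ μ) = 0) ∧
    (F1 σ μ (1/2 - deltaTilde σ μ) (1/2 + deltaTilde σ μ) = 0 ∧
      F2 σ μ (1/2 - deltaTilde σ μ) (1/2 + deltaTilde σ μ) = 0) := by
  have hgap : 0 < σ + 1 - (3 * σ + 4) * μ := by
    rw [lt_div_iff₀ (by linarith)] at hhi
    linarith
  have hden : 0 < σ * μ + σ + 1 := by positivity
  obtain ⟨hplus, hminus⟩ := isEquilibrium_antidiagonal (four_mul_deltaTilde_sq hgap.le hden)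
  refine ⟨?_, deltaTilde_pos hgap hden, deltaTilde_lt_half (by linarith) hlo hgap.le hden,
    hplus, hminus⟩
  rw [radicand_eq]
  exact mul_pos hgap hden
end
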